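/- arXiv:1006.1153 — 5 statements merged into one kernel-verified Lean document; each statement's English description precedes it below -/
import Mathlib

section
/- For the matrix A with rows (1,1,2,0) and (1,1,0,2), and for b₁, b₂ both odd, the number of positive integer solutions to Ax = (b₁,b₂) equals (1/4)b₁² - b₁ + 3/4 if b₁ ≤ b₂ and (1/4)b₂² - b₂ + 3/4 if b₁ ≥ b₂. -/
open Finset

lemma Int.exists_nat_eq_two_mul_add_one {b : ℤ} (hb : Odd b) (hpos : 0 < b) :
    ∃ c : ℕ, b = 2 * c + 1 := by
  obtain ⟨c, rfl⟩ := hb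
  lift c to ℕ using (by omega)
  exact ⟨c, rfl⟩

lemma sum_range_cast_two_mul (m : ℕ) : ∑ k ∈ range m, ((2 * k : ℕ) : ℚ) = m * (m - 1) := by
  induction m with
  | zero => simp
  | succ m ih =>
    rw [sum_range_succ, ih]
    push_cast
    ring

/-- A positive solution with `x₀ + x₁ = 2k + 1` and `x₀ = a + 1` corresponds to `(k, a)`;
positivity of `x₁`, `x₂`, `x₃` reads `a < 2k` and `k < min c₁ c₂`. -/
def positiveSolutionsEquivSigma (c₁ c₂ : ℕ) :
    {x : Fin 4 → ℤ // (∀ i, 0 < x i) ∧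
        x 0 + x 1 + 2 * x 2 = 2 * c₁ + 1 ∧ x 0 + x 1 + 2 * x 3 = 2 * c₂ + 1} ≃
      (range (min c₁ c₂)).sigma fun k => range (2 * k) where
  toFun x := ⟨⟨(c₁ - x.1 2).toNat, (x.1 0 - 1).toNat⟩, by
    obtain ⟨hpos, h₁, h₂⟩ := x.2
    have := hpos 0; have := hpos 1; have := hpos 2; have := hpos 3
    simp only [mem_sigma, mem_range]
    omega⟩
  invFun p := ⟨![p.1.2 + 1, 2 * p.1.1 - p.1.2, c₁ - p.1.1, c₂ - p.1.1], by
    have hp := p.2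
    simp only [mem_sigma, mem_range] at hp
    refine ⟨fun i => ?_, ?_, ?_⟩
    · fin_cases i <;> simp <;> omega
    · simp; omega
    · simp; omega⟩
  left_inv x := by
    obtain ⟨hpos, h₁, h₂⟩ := x.2
    have := hpos 0; have := hpos 1; have := hpos 2; have := hpos 3
    ext i
    fin_cases i <;> simp <;> omega
  right_inv p := by
    ext <;> simp

lemma card_positiveSolutions (c₁ c₂ : ℕ) :
    (Nat.card {x : Fin 4 → ℤ // (∀ i, 0 < x i) ∧
        x 0 + x 1 + 2 * x 2 = 2 * c₁ + 1 ∧ x 0 + x 1 + 2 * x 3 = 2 * c₂ + 1} : ℚ) =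
      (min c₁ c₂ : ℕ) * ((min c₁ c₂ : ℕ) - 1) := by
  rw [Nat.card_congr (positiveSolutionsEquivSigma c₁ c₂), Nat.card_eq_finsetCard, card_sigma]
  simp only [card_range]
  exact_mod_cast sum_range_cast_two_mul _

/-- For the matrix with rows `(1,1,2,0)` and `(1,1,0,2)` and `b₁, b₂` both odd (and positive),
the number of positive integer solutions to `Ax = (b₁,b₂)` equals `b₁²/4 - b₁ + 3/4` if
`b₁ ≤ b₂` and `b₂²/4 - b₂ + 3/4` if `b₁ ≥ b₂`. -/
theorem stmt3 (b₁ b₂ : ℤ) (h₁ : Odd b₁) (h₂ : Odd b₂) (hp₁ : 0 < b₁) (hp₂ : 0 < b₂) :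
    (Nat.card {x : Fin 4 → ℤ // (∀ i, 0 < x i) ∧
        x 0 + x 1 + 2 * x 2 = b₁ ∧ x 0 + x 1 + 2 * x 3 = b₂} : ℚ)
    = if b₁ ≤ b₂ then (1 / 4 : ℚ) * (b₁ : ℚ) ^ 2 - (b₁ : ℚ) + 3 / 4
      else (1 / 4 : ℚ) * (b₂ : ℚ) ^ 2 - (b₂ : ℚ) + 3 / 4 := by
  obtain ⟨c₁, rfl⟩ := Int.exists_nat_eq_two_mul_add_one h₁ hp₁
  obtain ⟨c₂, rfl⟩ := Int.exists_nat_eq_two_mul_add_one h₂ hp₂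
  rw [card_positiveSolutions]
  split_ifs with h
  · rw [min_eq_left (by omega)]
    push_cast
    ring
  · rw [min_eq_right (by omega)]
    push_cast
    ring
end

section
/- Define N_{0,4}(b₁,b₂,b₃,b₄) for positive even integers bᵢ by the recursion (∑bᵢ)·N_{0,4}(b) = ∑_{i≠j} 4·C((bᵢ+bⱼ)/2 + 1, 3). Then N_{0,4}(b₁,b₂,b₃,b₄) = (b₁² + b₂² + b₃² + b₄² − 4)/4. Equivalently, the identity ∑_{i≠j} 4·C((bᵢ+bⱼ)/2 + 1, 3) = (∑ᵢ bᵢ)·(∑ᵢ bᵢ² − 4)/4 holds for all even positive integers b₁,...,b₄. -/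
/-!
Write `bᵢ = 2cᵢ`. Since `C(s + 1, 3) = (s + 1) s (s - 1) / 6`, the claim becomes a polynomial
identity in the `cᵢ`; its cubic part is `∑_{i<j} (cᵢ + cⱼ)³ = 3 (∑ cᵢ)(∑ cᵢ²)`, which holds
because each `cᵢ` lies in exactly three of the six pairs, and its linear part likewise.
-/

namespace Nat

theorem cast_descFactorial_three {S : Type*} [Ring S] (a : ℕ) :
    (a.descFactorial 3 : S) = a * (a - 1) * (a - 2) := by
  -- the factors are casts of integers, so the identity is proved in the commutative ring `ℤ`
  have h : (a.descFactorial 3 : ℤ) = a * (a - 1) * (a - 2) := by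
    rcases a with _ | _ | a <;> simp [descFactorial]
    ring
  simpa using congrArg (Int.cast : ℤ → S) h

theorem cast_choose_three {K : Type*} [DivisionRing K] [CharZero K] (a : ℕ) :
    (a.choose 3 : K) = a * (a - 1) * (a - 2) / 6 := by
  rw [← cast_descFactorial_three, descFactorial_eq_factorial_mul_choose, cast_mul,
    eq_div_iff (by norm_num), ← Nat.cast_comm]
  norm_num [factorial]

end Nat

theorem Fin.sum_filter_lt_fin_four {M : Type*} [AddCommMonoid M] (f : Fin 4 × Fin 4 → M) :
    ∑ p ∈ Finset.univ.filter (fun p : Fin 4 × Fin 4 => p.1 < p.2), f p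
      = f (0, 1) + f (0, 2) + f (0, 3) + f (1, 2) + f (1, 3) + f (2, 3) := by
  rw [show Finset.univ.filter (fun p : Fin 4 × Fin 4 => p.1 < p.2)
      = {(0, 1), (0, 2), (0, 3), (1, 2), (1, 3), (2, 3)} by decide]
  simp [add_assoc]

theorem stmt11_general (b : Fin 4 → ℕ) (he : ∀ i, Even (b i)) :
    (∑ p ∈ Finset.univ.filter (fun p : Fin 4 × Fin 4 => p.1 < p.2),
        (4 * Nat.choose ((b p.1 + b p.2) / 2 + 1) 3 : ℚ))
      = (∑ i, (b i : ℚ)) * ((∑ i, (b i : ℚ) ^ 2) - 4) / 4 := by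
  choose c hc using he
  have half_add : ∀ i j, (b i + b j) / 2 = c i + c j := fun i j => by rw [hc i, hc j]; omega
  simp only [Fin.sum_filter_lt_fin_four, half_add, Nat.cast_choose_three, Fin.sum_univ_four]
  simp only [hc]
  push_cast
  ring

/-- For positive even integers `b₁,...,b₄`, summing `4·C((bᵢ+bⱼ)/2 + 1, 3)` over the six
unordered pairs `{i,j}` gives `(∑ bᵢ)·(∑ bᵢ² - 4)/4`, i.e. the recursion determines
`N_{0,4}(b) = (b₁² + b₂² + b₃² + b₄² - 4)/4`. -/
theorem stmt11 (b : Fin 4 → ℕ) (hp : ∀ i, 0 < b i) (he : ∀ i, Even (b i)) :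
    (∑ p ∈ Finset.univ.filter (fun p : Fin 4 × Fin 4 => p.1 < p.2),
        (4 * Nat.choose ((b p.1 + b p.2) / 2 + 1) 3 : ℚ))
      = (∑ i, (b i : ℚ)) * ((∑ i, (b i : ℚ) ^ 2) - 4) / 4 :=
  stmt11_general b he
end

section
/- For b₁, b₂ odd positive integers and b₃, b₄ even positive integers, the identity 4·C((b₁+b₂)/2 + 1, 3) + 4·C((b₃+b₄)/2 + 1, 3) + ∑_{(i,j) mixed parity pairs} (1/2)·C(bᵢ+bⱼ+1, 3) = (∑ᵢ bᵢ)·(b₁² + b₂² + b₃² + b₄² − 2)/4 holds, where the mixed-parity sum runs over the ordered pairs (i,j) with {i,j} ∈ {{1,3},{1,4},{2,3},{2,4}}, each counted twice (i.e. 8 terms total, or 4 unordered pairs each with weight 1). -/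
/-! Once `C(k/2 + 1, 3)` (for `k` even, here `b₁ + b₂` and `b₃ + b₄`) and `C(k + 1, 3)` are written
as cubic polynomials in `k`, the identity is a polynomial identity in `b₁, …, b₄`. -/

theorem Nat.cast_choose_three_s12 {K : Type*} [Field K] [CharZero K] (a : ℕ) :
    (a.choose 3 : K) = a * (a - 1) * (a - 2) / 6 := by
  rw [cast_choose_eq_descPochhammer_div]
  simp only [descPochhammer_succ_right, descPochhammer_zero, Polynomial.eval_mul,
    Polynomial.eval_sub, Polynomial.eval_X, Polynomial.eval_natCast, Polynomial.eval_one]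
  norm_num [Nat.factorial]

theorem Nat.cast_choose_add_one_three {K : Type*} [Field K] [CharZero K] (k : ℕ) :
    ((k + 1).choose 3 : K) = (k + 1) * k * (k - 1) / 6 := by
  rw [Nat.cast_choose_three_s12]
  push_cast
  ring

theorem Nat.cast_choose_half_add_one_three {K : Type*} [Field K] [CharZero K] {k : ℕ}
    (hk : Even k) : ((k / 2 + 1).choose 3 : K) = (k + 2) * k * (k - 2) / 48 := by
  rw [Nat.cast_choose_add_one_three, Nat.cast_div_charZero (even_iff_two_dvd.mp hk)]
  push_cast
  ring

theorem stmt12_general (b₁ b₂ b₃ b₄ : ℕ) (h₁ : Odd b₁) (h₂ : Odd b₂) (h₃ : Even b₃) (h₄ : Even b₄) :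
    4 * (Nat.choose ((b₁ + b₂) / 2 + 1) 3 : ℚ)
      + 4 * (Nat.choose ((b₃ + b₄) / 2 + 1) 3 : ℚ)
      + (1 / 2 : ℚ) * ((Nat.choose (b₁ + b₃ + 1) 3 : ℚ) + (Nat.choose (b₁ + b₄ + 1) 3 : ℚ)
          + (Nat.choose (b₂ + b₃ + 1) 3 : ℚ) + (Nat.choose (b₂ + b₄ + 1) 3 : ℚ))
      = ((b₁ : ℚ) + b₂ + b₃ + b₄) *
          ((b₁ : ℚ) ^ 2 + (b₂ : ℚ) ^ 2 + (b₃ : ℚ) ^ 2 + (b₄ : ℚ) ^ 2 - 2) / 4 := by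
  rw [Nat.cast_choose_half_add_one_three (h₁.add_odd h₂),
    Nat.cast_choose_half_add_one_three (h₃.add h₄)]
  simp only [Nat.cast_choose_add_one_three]
  push_cast
  ring

/-- For `b₁, b₂` odd positive and `b₃, b₄` even positive, the mixed-parity recursion identity
`4·C((b₁+b₂)/2+1,3) + 4·C((b₃+b₄)/2+1,3) + ∑_{mixed pairs} (1/2)·C(bᵢ+bⱼ+1,3)
 = (∑ bᵢ)·(∑ bᵢ² - 2)/4` holds. -/
theorem stmt12 (b₁ b₂ b₃ b₄ : ℕ) (h₁ : Odd b₁) (h₂ : Odd b₂) (h₃ : Even b₃) (h₄ : Even b₄)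
    (hp₁ : 0 < b₁) (hp₂ : 0 < b₂) (hp₃ : 0 < b₃) (hp₄ : 0 < b₄) :
    4 * (Nat.choose ((b₁ + b₂) / 2 + 1) 3 : ℚ)
      + 4 * (Nat.choose ((b₃ + b₄) / 2 + 1) 3 : ℚ)
      + (1 / 2 : ℚ) * ((Nat.choose (b₁ + b₃ + 1) 3 : ℚ) + (Nat.choose (b₁ + b₄ + 1) 3 : ℚ)
          + (Nat.choose (b₂ + b₃ + 1) 3 : ℚ) + (Nat.choose (b₂ + b₄ + 1) 3 : ℚ))
      = ((b₁ : ℚ) + b₂ + b₃ + b₄) *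
          ((b₁ : ℚ) ^ 2 + (b₂ : ℚ) ^ 2 + (b₃ : ℚ) ^ 2 + (b₄ : ℚ) ^ 2 - 2) / 4 :=
  stmt12_general b₁ b₂ b₃ b₄ h₁ h₂ h₃ h₄
end

section
/- Let c(n,k) be defined by c(0,k) = k, c(n,0) = 0 for n,k ≥ 0, and c(n,k) = c(n,k−1) + c(n−1,k) + c(n−1,k−1) for n,k > 0. Then as formal power series in x, 1 + 2·∑_{n≥0} c(n,k)·x^{n+1} = ((1+x)/(1−x))^k for every nonnegative integer k. -/
/-!
Write `G k = 1 + 2x·C k` with `C k = ∑ₙ c(n,k) xⁿ` the `k`-th column of `c`. The recursion for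
`c`, together with `c(0,k+1) = c(0,k) + 1`, says coefficientwise that
`(1 - x)·C(k+1) = 1 + (1 + x)·C k`, which is equivalent to `(1 - x)·G(k+1) = (1 + x)·G k`.
Since `G 0 = 1`, induction on `k` gives `(1 - x)^k·G k = (1 + x)^k`.
-/

open PowerSeries

theorem pow_mul_eq_pow_of_mul_succ_eq {M : Type*} [CommMonoid M] {a b : M} {F : ℕ → M}
    (h0 : F 0 = 1) (hs : ∀ k, a * F (k + 1) = b * F k) (k : ℕ) : a ^ k * F k = b ^ k := by
  induction k with
  | zero => simp [h0]
  | succ k ih => rw [pow_succ, mul_assoc, hs, mul_left_comm, ih, pow_succ']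

namespace PowerSeries

variable {R : Type*} [CommRing R]

theorem mk_ite_zero_eq_one_add_X_mul (f : ℕ → R) :
    mk (fun m => if m = 0 then 1 else f (m - 1)) = 1 + X * mk f := by
  ext (_ | n) <;> simp [coeff_succ_X_mul]

theorem mk_const_mul (a : R) (f : ℕ → R) : mk (fun n => a * f n) = C a * mk f := by
  ext n; simp

theorem one_sub_X_mul_mk_succ (c : ℕ → ℕ → R) (h0 : ∀ k, c 0 (k + 1) = c 0 k + 1)
    (hrec : ∀ n k, c (n + 1) (k + 1) = c (n + 1) k + c n (k + 1) + c n k) (k : ℕ) :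
    (1 - X) * mk (fun n => c n (k + 1)) = 1 + (1 + X) * mk (fun n => c n k) := by
  ext (_ | n)
  · simp [h0, add_comm]
  · simp [sub_mul, add_mul, coeff_succ_X_mul, hrec]
    ring

theorem one_sub_X_pow_mul_one_add_two_X_mul_mk (c : ℕ → ℕ → R) (h0 : ∀ k, c 0 k = k)
    (h0' : ∀ n, c n 0 = 0)
    (hrec : ∀ n k, c (n + 1) (k + 1) = c (n + 1) k + c n (k + 1) + c n k) (k : ℕ) :
    (1 - X) ^ k * (1 + 2 * X * mk fun n => c n k) = (1 + X) ^ k := by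
  refine pow_mul_eq_pow_of_mul_succ_eq (F := fun k => 1 + 2 * X * mk fun n => c n k) ?_
    (fun k => ?_) k
  · have hrow0 : (mk fun n => c n 0) = 0 := by ext; simp [h0']
    simp [hrow0]
  · linear_combination 2 * X * one_sub_X_mul_mk_succ c (by simp [h0]) hrec k

end PowerSeries

/-- If `c(0,k) = k`, `c(n,0) = 0` and `c(n,k) = c(n,k-1) + c(n-1,k) + c(n-1,k-1)` for
`n,k > 0`, then `1 + 2·∑_{n≥0} c(n,k)·x^{n+1} = ((1+x)/(1-x))^k` as formal power series,
i.e. `(1 - x)^k · (1 + 2·∑_{n≥0} c(n,k)·x^{n+1}) = (1 + x)^k`. -/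
theorem stmt14 (c : ℕ → ℕ → ℤ)
    (h0 : ∀ k, c 0 k = k) (h0' : ∀ n, c n 0 = 0)
    (hrec : ∀ n k, c (n + 1) (k + 1) = c (n + 1) k + c n (k + 1) + c n k)
    (k : ℕ) :
    (1 - X : ℤ⟦X⟧) ^ k *
        PowerSeries.mk (fun m => if m = 0 then 1 else 2 * c (m - 1) k)
      = (1 + X : ℤ⟦X⟧) ^ k := by
  rw [mk_ite_zero_eq_one_add_X_mul (fun n => 2 * c n k), mk_const_mul, map_ofNat, mul_left_comm,
    ← mul_assoc]
  exact one_sub_X_pow_mul_one_add_two_X_mul_mk c h0 h0' hrec k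
end

section
/- For a linear map A : ℝᴺ → ℝⁿ with strictly positive... (nonnegative entries and nonzero columns α₁,...,α_N ∈ ℝⁿ), the Laplace transform of the polytope volume satisfies ∫_{ℝ₊ⁿ} e^{−b·s} V_{P_A}(b) db = ∏_{i=1}^N 1/(αᵢ·s) for all s ∈ ℝⁿ with all coordinates strictly positive, where V_{P_A}(b) is the quotient volume of P_A(b) = {x ∈ ℝ₊ᴺ : Ax = b}. Equivalently (Fubini/pushforward form): ∫_{ℝ₊ᴺ} e^{−(Ax)·s} dx = ∏_{i=1}^N 1/(αᵢ·s). -/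
open MeasureTheory

theorem setIntegral_univ_pi_prod_eq_prod {ι 𝕜 : Type*} [Fintype ι] [RCLike 𝕜]
    {E : ι → Type*} {mE : ∀ i, MeasurableSpace (E i)} {μ : (i : ι) → Measure (E i)}
    [∀ i, SigmaFinite (μ i)] (s : (i : ι) → Set (E i)) (f : (i : ι) → E i → 𝕜) :
    ∫ x in Set.univ.pi s, ∏ i, f i (x i) ∂Measure.pi μ = ∏ i, ∫ x in s i, f i x ∂μ i := by
  rw [Measure.restrict_pi_pi, integral_fintype_prod_eq_prod]

theorem integral_exp_neg_mul_Ioi_zero {c : ℝ} (hc : 0 < c) :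
    ∫ t in Set.Ioi (0 : ℝ), Real.exp (-(c * t)) = 1 / c := by
  simpa [neg_mul, neg_div_neg_eq] using integral_exp_mul_Ioi (neg_neg_of_pos hc) 0

theorem sum_mul_pos_of_nonneg_of_ne_zero {ι : Type*} [Fintype ι] {v s : ι → ℝ}
    (hv : ∀ j, 0 ≤ v j) (hv0 : v ≠ 0) (hs : ∀ j, 0 < s j) : 0 < ∑ j, v j * s j := by
  obtain ⟨j, hj⟩ := Function.ne_iff.mp hv0
  exact Finset.sum_pos' (fun j _ => mul_nonneg (hv j) (hs j).le)
    ⟨j, Finset.mem_univ j, mul_pos ((hv j).lt_of_ne' hj) (hs j)⟩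

theorem sum_sum_mul_mul_comm {ι κ : Type*} [Fintype ι] [Fintype κ] (α : ι → κ → ℝ)
    (x : ι → ℝ) (s : κ → ℝ) :
    ∑ j, (∑ i, α i j * x i) * s j = ∑ i, (∑ j, α i j * s j) * x i := by
  simp only [Finset.sum_mul]
  rw [Finset.sum_comm]
  exact Finset.sum_congr rfl fun i _ => Finset.sum_congr rfl fun j _ => by ring

/-- Laplace transform of the polytope volume, in pushforward form: for a matrix `A` with
nonnegative entries and nonzero columns `α₁,...,α_N` and `s` with strictly positive
coordinates, `∫_{ℝ₊ᴺ} e^{-(Ax)·s} dx = ∏ᵢ 1/(αᵢ·s)`. -/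
theorem stmt19 (N n : ℕ) (α : Fin N → Fin n → ℝ) (s : Fin n → ℝ)
    (hα : ∀ i j, 0 ≤ α i j) (hcol : ∀ i, α i ≠ 0) (hs : ∀ j, 0 < s j) :
    (∫ x in Set.univ.pi (fun _ : Fin N => Set.Ioi (0 : ℝ)),
        Real.exp (-(∑ j, (∑ i, α i j * x i) * s j)))
      = ∏ i, 1 / (∑ j, α i j * s j) := by
  set c : Fin N → ℝ := fun i => ∑ j, α i j * s j
  have hc : ∀ i, 0 < c i := fun i => sum_mul_pos_of_nonneg_of_ne_zero (hα i) (hcol i) hs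
  have hfactor : ∀ x : Fin N → ℝ,
      Real.exp (-(∑ j, (∑ i, α i j * x i) * s j)) = ∏ i, Real.exp (-(c i * x i)) := fun x => by
    rw [sum_sum_mul_mul_comm, ← Finset.sum_neg_distrib, Real.exp_sum]
  simp_rw [hfactor]
  rw [volume_pi, setIntegral_univ_pi_prod_eq_prod _ fun i t => Real.exp (-(c i * t))]
  exact Finset.prod_congr rfl fun i _ => integral_exp_neg_mul_Ioi_zero (hc i)
end
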